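/- arXiv:2211.10395 — 2 statements merged into one kernel-verified Lean document; each statement's English description precedes it below -/
import Mathlib

section
/- The basic incidence matrix of a directed tree (the incidence matrix with the row corresponding to the root node removed) is invertible. -/
/-- The basic incidence matrix of a directed tree (rooted at `α`, all edges directed
away from `α`, edges indexed by the non-root nodes via the parent map `p`, acyclicity
witnessed by a depth function `d`) is invertible. -/
theorem basic_incidence_matrix_invertible {n : ℕ} (α : Fin (n + 1))
    (p : Fin (n + 1) → Fin (n + 1)) (d : Fin (n + 1) → ℕ)
    (hd : ∀ v, v ≠ α → d (p v) < d v)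
    (B : Matrix {v : Fin (n + 1) // v ≠ α} {v : Fin (n + 1) // v ≠ α} ℝ)
    (hB : ∀ i j : {v : Fin (n + 1) // v ≠ α},
      B i j = if (j : Fin (n + 1)) = (i : Fin (n + 1)) then 1
        else if p (j : Fin (n + 1)) = (i : Fin (n + 1)) then -1 else 0) :
    IsUnit B := by
  set b : {v : Fin (n + 1) // v ≠ α} → ℕ := fun i => d (i : Fin (n + 1)) with hb
  have hBT : B.BlockTriangular b := by
    intro i j hij
    have hij' : d (j : Fin (n + 1)) < d (i : Fin (n + 1)) := hij
    have h1 : ¬ ((j : Fin (n + 1)) = (i : Fin (n + 1))) := by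
      intro h; rw [h] at hij'; exact lt_irrefl _ hij'
    have h2 : ¬ (p (j : Fin (n + 1)) = (i : Fin (n + 1))) := by
      intro h
      have h3 := hd (j : Fin (n + 1)) j.2
      rw [h] at h3
      omega
    rw [hB, if_neg h1, if_neg h2]
  have hdet : B.det = 1 := by
    rw [hBT.det]
    have hblock : ∀ a ∈ Finset.univ.image b, (B.toSquareBlock b a).det = 1 := by
      intro a _
      have heq : B.toSquareBlock b a = 1 := by
        ext i j
        simp only [Matrix.toSquareBlock_def, Matrix.of_apply, hB]
        by_cases h : ((j : {v : Fin (n + 1) // v ≠ α}) : Fin (n + 1))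
            = ((i : {v : Fin (n + 1) // v ≠ α}) : Fin (n + 1))
        · rw [if_pos h]
          have hij : i = j := Subtype.ext (Subtype.ext h.symm)
          rw [hij, Matrix.one_apply_eq]
        · rw [if_neg h, Matrix.one_apply_ne]
          · rw [if_neg]
            intro hc
            have h3 := hd ((j : {v : Fin (n + 1) // v ≠ α}) : Fin (n + 1)) j.1.2
            rw [hc] at h3
            have hi : d ((i : {v : Fin (n + 1) // v ≠ α}) : Fin (n + 1)) = a := i.2
            have hj : d ((j : {v : Fin (n + 1) // v ≠ α}) : Fin (n + 1)) = a := j.2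
            omega
          · intro hc
            exact h (by rw [hc])
      rw [heq, Matrix.det_one]
    rw [Finset.prod_congr rfl hblock, Finset.prod_const_one]
  rw [Matrix.isUnit_iff_isUnit_det, hdet]
  exact isUnit_one
end

section
/- Let the supply tree have internal nodes of degree at least 3 and suppose, for edges e along a root-to-node path, a relation Σ_e g(q_e)λ_e = 0 holds for all flow vectors arising from arbitrary positive boundary flows, where g is strictly increasing with g(0)=0. Then λ_e = 0 for all e. -/
/-- If `g` is strictly increasing with `g 0 = 0` and the linear relation
`Σ_{i<p} g(q i) λ i = 0` holds for every admissible path flow vector — i.e. every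
strictly decreasing, positive sequence `q 0 > q 1 > … > q (p-1) > 0`, which are exactly
the flows arising from arbitrary positive boundary flows along a path whose internal
nodes have degree at least 3 — then every coefficient `λ i` vanishes. -/
theorem path_coefficients_vanish (p : ℕ) (hp : 1 ≤ p) (g : ℝ → ℝ)
    (hg : StrictMono g) (hg0 : g 0 = 0) (lam : ℕ → ℝ)
    (H : ∀ q : ℕ → ℝ, (∀ i, i + 1 < p → q (i + 1) < q i) → 0 < q (p - 1) →
      ∑ i ∈ Finset.range p, g (q i) * lam i = 0) :
    ∀ i, i < p → lam i = 0 := by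
  intro j hj
  set q1 : ℕ → ℝ := fun i => (p : ℝ) - i with hq1
  set q2 : ℕ → ℝ := fun i => if i = j then (p : ℝ) - j + 1/2 else (p : ℝ) - i with hq2
  have hdec1 : ∀ i, i + 1 < p → q1 (i + 1) < q1 i := by
    intro i _
    simp only [hq1]
    push_cast
    linarith
  have hpos1 : 0 < q1 (p - 1) := by
    simp only [hq1]
    rw [Nat.cast_sub hp]
    norm_num
  have hdec2 : ∀ i, i + 1 < p → q2 (i + 1) < q2 i := by
    intro i _
    have h1 : i + 1 ≠ i := by omega
    rcases eq_or_ne i j with h | h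
    · subst h
      simp only [hq2, if_pos rfl, if_neg h1]
      push_cast
      linarith
    · rcases eq_or_ne (i + 1) j with h2 | h2
      · subst h2
        simp only [hq2, if_pos rfl, if_neg h]
        push_cast
        linarith
      · simp only [hq2, if_neg h, if_neg h2]
        push_cast
        linarith
  have hpos2 : 0 < q2 (p - 1) := by
    have hjp : (j : ℝ) < p := by exact_mod_cast hj
    rcases eq_or_ne (p - 1) j with h | h
    · simp only [hq2, if_pos h]
      linarith
    · simp only [hq2, if_neg h]
      rw [Nat.cast_sub hp]
      norm_num
  have H1 := H q1 hdec1 hpos1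
  have H2 := H q2 hdec2 hpos2
  have hsum : ∑ i ∈ Finset.range p, (g (q2 i) - g (q1 i)) * lam i
      = (g ((p : ℝ) - j + 1/2) - g ((p : ℝ) - j)) * lam j := by
    rw [Finset.sum_eq_single j]
    · simp [hq1, hq2]
    · intro b _ hb
      simp [hq1, hq2, hb]
    · intro hjmem
      exact absurd (Finset.mem_range.mpr hj) hjmem
  have hz : ∑ i ∈ Finset.range p, (g (q2 i) - g (q1 i)) * lam i = 0 := by
    simp only [sub_mul, Finset.sum_sub_distrib, H1, H2, sub_zero]
  rw [hsum] at hz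
  have hne : g ((p : ℝ) - j + 1/2) - g ((p : ℝ) - j) ≠ 0 := by
    have := hg (show (p : ℝ) - j < (p : ℝ) - j + 1/2 by linarith)
    linarith
  exact (mul_eq_zero.mp hz).resolve_left hne
end
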